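/- Let 𝒜 ∈ M₃(ℝ), k > 0 with 𝒜²Γ = -k²Γ for some nonzero Γ ∈ ℝ³, and suppose no eigenvector of 𝒜² for -k² lies in P₊ = {(a,b,c) : ac > b²} but some nonzero eigenvector lies in P₀ = {(a,b,c) : ac = b²}. Pick Γ = (γ₁,γ₂,γ₃) ∈ W(-k²,𝒜²) ∩ P₀ with γ₁ > 0 and γ₃ ≥ 0. After the linear change of variables B₁ = √γ₁ A₁ + sign(γ₂)√γ₃ A₂, B₂ = A₂/√γ₁, the transformed matrix 𝒜' satisfies (𝒜')²(1,0,0)ᵀ = -k'²(1,0,0)ᵀ for some k' > 0, and writing 𝒜'(1,0,0)ᵀ = (γ̃₁,γ̃₂,γ̃₃)ᵀ one has γ̃₃ = 0. -/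
import Mathlib


open Matrix

/-- The 3×3 matrix `D(M)` induced by a 2×2 matrix `M = [[a,b],[c,d]]`. -/
noncomputable def Dmat (a b c d : ℝ) : Matrix (Fin 3) (Fin 3) ℝ :=
  (a * d - b * c)⁻¹ •
    !![d ^ 2, -2 * c * d, c ^ 2;
       -b * d, a * d + b * c, -a * c;
       b ^ 2, -2 * a * b, a ^ 2]

/-- The inverse of `D(M)`. -/
noncomputable def DmatInv (a b c d : ℝ) : Matrix (Fin 3) (Fin 3) ℝ :=
  (a * d - b * c)⁻¹ •
    !![a ^ 2, 2 * a * c, c ^ 2;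
       a * b, a * d + b * c, c * d;
       b ^ 2, 2 * b * d, d ^ 2]

/-- If `L*h + Q*h² ≤ 0` for every real `h`, then `L = 0`. -/
lemma linear_coeff_zero (L Q : ℝ) (h : ∀ x : ℝ, L * x + Q * x ^ 2 ≤ 0) : L = 0 := by
  by_contra hL
  have hd : (0:ℝ) < 2 * (|Q| + 1) := by positivity
  set y : ℝ := L / (2 * (|Q| + 1)) with hy
  have hx := h y
  have ey : y * (2 * (|Q| + 1)) = L := div_mul_cancel₀ L hd.ne'
  have hyne : y ≠ 0 := by
    intro h0; rw [h0, zero_mul] at ey; exact hL ey.symm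
  have hy2 : 0 < y ^ 2 := by positivity
  have hLy : L * y = (2 * (|Q| + 1)) * y ^ 2 := by rw [← ey]; ring
  have habs2 : -|Q| ≤ Q := neg_abs_le Q
  nlinarith [mul_le_mul_of_nonneg_right habs2 hy2.le]

theorem stmt18 (𝒜 : Matrix (Fin 3) (Fin 3) ℝ) (k : ℝ) (hk : 0 < k)
    (γ₁ γ₂ γ₃ : ℝ) (hγ₁ : 0 < γ₁) (hγ₃ : 0 ≤ γ₃)
    (hP₀ : γ₁ * γ₃ = γ₂ ^ 2)
    (heig : (𝒜 * 𝒜).mulVec ![γ₁, γ₂, γ₃] = (-(k ^ 2)) • ![γ₁, γ₂, γ₃])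
    (hnoPplus : ∀ v : Fin 3 → ℝ, (𝒜 * 𝒜).mulVec v = (-(k ^ 2)) • v →
      ¬ (v 0 * v 2 > (v 1) ^ 2)) :
    let a : ℝ := Real.sqrt γ₁
    let b : ℝ := Real.sign γ₂ * Real.sqrt γ₃
    let c : ℝ := 0
    let d : ℝ := (Real.sqrt γ₁)⁻¹
    let 𝒜' : Matrix (Fin 3) (Fin 3) ℝ :=
      (a * d - b * c)⁻¹ • (Dmat a b c d * 𝒜 * DmatInv a b c d)
    ∃ k' : ℝ, 0 < k' ∧
      (𝒜' * 𝒜').mulVec ![1, 0, 0] = (-(k' ^ 2)) • ![1, 0, 0] ∧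
      (𝒜'.mulVec ![1, 0, 0]) 2 = 0 := by
  intro a b c d 𝒜'
  have hs : 0 < Real.sqrt γ₁ := Real.sqrt_pos.mpr hγ₁
  have ha2 : a ^ 2 = γ₁ := Real.sq_sqrt hγ₁.le
  have had : a * d = 1 := mul_inv_cancel₀ hs.ne'
  have hc : c = 0 := rfl
  have h𝒜'0 : 𝒜' = (a * d - b * c)⁻¹ • (Dmat a b c d * 𝒜 * DmatInv a b c d) := rfl
  -- a*b = γ₂ and b^2 = γ₃
  have hsqrt13 : Real.sqrt γ₁ * Real.sqrt γ₃ = |γ₂| := by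
    rw [← Real.sqrt_mul hγ₁.le, hP₀, Real.sqrt_sq_eq_abs]
  have hab : a * b = γ₂ := by
    show Real.sqrt γ₁ * (Real.sign γ₂ * Real.sqrt γ₃) = γ₂
    rcases lt_trichotomy γ₂ 0 with h | h | h
    · rw [Real.sign_of_neg h]
      have e : Real.sqrt γ₁ * (-1 * Real.sqrt γ₃) = -(Real.sqrt γ₁ * Real.sqrt γ₃) := by ring
      rw [e, hsqrt13, abs_of_neg h, neg_neg]
    · have h3 : γ₃ = 0 := by
        have := hP₀; rw [h] at this; nlinarith
      simp [h, h3]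
    · rw [Real.sign_of_pos h]
      have e : Real.sqrt γ₁ * (1 * Real.sqrt γ₃) = Real.sqrt γ₁ * Real.sqrt γ₃ := by ring
      rw [e, hsqrt13, abs_of_pos h]
  have hb2 : b ^ 2 = γ₃ := by
    show (Real.sign γ₂ * Real.sqrt γ₃) ^ 2 = γ₃
    rcases lt_trichotomy γ₂ 0 with h | h | h
    · rw [Real.sign_of_neg h, mul_pow, Real.sq_sqrt hγ₃]; ring
    · have h3 : γ₃ = 0 := by
        have := hP₀; rw [h] at this; nlinarith
      simp [h, h3]
    · rw [Real.sign_of_pos h, mul_pow, Real.sq_sqrt hγ₃]; ring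
  clear_value a b c d 𝒜'
  subst hc
  have hdet : a * d - b * 0 = 1 := by rw [mul_zero, sub_zero, had]
  have h𝒜' : 𝒜' = Dmat a b 0 d * 𝒜 * DmatInv a b 0 d := by
    rw [h𝒜'0, hdet, inv_one, one_smul]
  -- explicit forms of Dmat / DmatInv with c = 0 and a*d = 1
  have hD : Dmat a b 0 d = !![d ^ 2, 0, 0; -(b * d), 1, 0; b ^ 2, -(2 * a * b), a ^ 2] := by
    rw [Dmat, hdet]
    norm_num [had]
  have hDi : DmatInv a b 0 d = !![a ^ 2, 0, 0; a * b, 1, 0; b ^ 2, 2 * b * d, d ^ 2] := by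
    rw [DmatInv, hdet]
    norm_num [had]
  have hDID : DmatInv a b 0 d * Dmat a b 0 d = 1 := by
    rw [hD, hDi]
    ext i j
    fin_cases i <;> fin_cases j <;>
      simp [Matrix.mul_apply, Fin.sum_univ_three, Matrix.one_apply] <;>
      first
        | ring1
        | linear_combination (a * d + 1) * had
        | linear_combination (b * d) * had
        | linear_combination (-2 * b * d) * had
  have hDie : (DmatInv a b 0 d).mulVec ![1, 0, 0] = ![γ₁, γ₂, γ₃] := by
    rw [hDi]
    funext i
    fin_cases i <;>
      simp [Matrix.mulVec, dotProduct, Fin.sum_univ_three, ha2, hab, hb2]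
  have hDe : (Dmat a b 0 d).mulVec ![γ₁, γ₂, γ₃] = ![1, 0, 0] := by
    rw [hD]
    funext i
    fin_cases i <;>
      simp [Matrix.mulVec, dotProduct, Fin.sum_univ_three] <;>
      first
        | linear_combination (-(d ^ 2)) * ha2 + (a * d + 1) * had
        | linear_combination d ^ 2 * ha2 + (-(a * d + 1)) * had
        | linear_combination (b * d) * ha2 + (-(a * b)) * had + (-1 : ℝ) * hab
        | linear_combination (-(b * d)) * ha2 + (a * b) * had + hab
        | linear_combination γ₁ * hb2 + (-2 * γ₂) * hab + γ₃ * ha2 + 2 * hP₀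
  -- the square of 𝒜'
  have hsq : 𝒜' * 𝒜' = Dmat a b 0 d * (𝒜 * 𝒜) * DmatInv a b 0 d := by
    rw [h𝒜']
    simp only [Matrix.mul_assoc]
    congr 2
    rw [← Matrix.mul_assoc, hDID, Matrix.one_mul]
  -- first claim
  have heig' : (𝒜' * 𝒜').mulVec ![1, 0, 0] = (-(k ^ 2)) • ![1, 0, 0] := by
    rw [hsq, ← Matrix.mulVec_mulVec, hDie, ← Matrix.mulVec_mulVec, heig,
      Matrix.mulVec_smul, hDe]
  -- second claim: the linear coefficient vanishes
  set t : Fin 3 → ℝ := 𝒜.mulVec ![γ₁, γ₂, γ₃] with ht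
  have hteig : (𝒜 * 𝒜).mulVec t = (-(k ^ 2)) • t := by
    rw [ht, Matrix.mulVec_mulVec, Matrix.mul_assoc, ← Matrix.mulVec_mulVec, heig,
      Matrix.mulVec_smul]
  have hL : γ₃ * t 0 - 2 * γ₂ * t 1 + γ₁ * t 2 = 0 := by
    have key : ∀ x : ℝ, (γ₃ * t 0 - 2 * γ₂ * t 1 + γ₁ * t 2) * x
        + (t 0 * t 2 - (t 1) ^ 2) * x ^ 2 ≤ 0 := by
      intro x
      have hv : (𝒜 * 𝒜).mulVec (![γ₁, γ₂, γ₃] + x • t) =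
          (-(k ^ 2)) • (![γ₁, γ₂, γ₃] + x • t) := by
        rw [Matrix.mulVec_add, Matrix.mulVec_smul, heig, hteig, smul_add, smul_comm]
      have hnp := hnoPplus _ hv
      push_neg at hnp
      simp only [Pi.add_apply, Pi.smul_apply, smul_eq_mul] at hnp
      have h0 : (![γ₁, γ₂, γ₃] : Fin 3 → ℝ) 0 = γ₁ := rfl
      have h1 : (![γ₁, γ₂, γ₃] : Fin 3 → ℝ) 1 = γ₂ := rfl
      have h2 : (![γ₁, γ₂, γ₃] : Fin 3 → ℝ) 2 = γ₃ := rfl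
      rw [h0, h1, h2] at hnp
      nlinarith [hnp, hP₀]
    exact linear_coeff_zero _ _ key
  refine ⟨k, hk, heig', ?_⟩
  have hfin : 𝒜'.mulVec ![1, 0, 0] = (Dmat a b 0 d).mulVec t := by
    rw [h𝒜', ← Matrix.mulVec_mulVec, hDie, ← Matrix.mulVec_mulVec, ht]
  rw [hfin, hD]
  have goal2 : (!![d ^ 2, 0, 0; -(b * d), 1, 0; b ^ 2, -(2 * a * b), a ^ 2].mulVec t) 2
      = b ^ 2 * t 0 - 2 * a * b * t 1 + a ^ 2 * t 2 := by
    simp [Matrix.mulVec, dotProduct, Fin.sum_univ_three]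
    ring
  rw [goal2]
  linear_combination t 0 * hb2 + (-2 * t 1) * hab + t 2 * ha2 + hL
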